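/- If a is a critical configuration and σ is a G-positive (not necessarily G-strongly positive) script, then (a + σΔ)° = a. -/

import Mathlib

/-- A finite directed multigraph without loops on `Fin (n+1)` with global sink `Fin.last n`. -/
structure SinkDigraph (n : ℕ) where
  e : Fin (n + 1) → Fin (n + 1) → ℕ
  loopless : ∀ i, e i i = 0
  sink_no_out : ∀ j, e (Fin.last n) j = 0
  path_to_sink : ∀ i, Relation.ReflTransGen (fun u v => 0 < e u v) i (Fin.last n)

namespace SinkDigraph

variable {n : ℕ}

/-- Out-degree of a vertex. -/
def outDeg (G : SinkDigraph n) (i : Fin (n + 1)) : ℕ := ∑ j, G.e i j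

/-- The (full) Laplacian matrix over ℤ. -/
def lap (G : SinkDigraph n) : Matrix (Fin (n + 1)) (Fin (n + 1)) ℤ :=
  Matrix.of fun i j => if i = j then (G.outDeg i : ℤ) else -(G.e i j : ℤ)

/-- The reduced Laplacian (rows/columns of the sink removed). -/
def redLap (G : SinkDigraph n) : Matrix (Fin n) (Fin n) ℤ :=
  Matrix.of fun i j => G.lap i.castSucc j.castSucc

/-- The reduced Laplacian over ℚ. -/
def redLapQ (G : SinkDigraph n) : Matrix (Fin n) (Fin n) ℚ :=
  (G.redLap).map (Int.cast : ℤ → ℚ)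

/-- A ℕ-script viewed as integer vector. -/
def natScript (σ : Fin n → ℕ) : Fin n → ℤ := fun i => (σ i : ℤ)

/-- Result of firing vertex `i` in configuration `a`. -/
def fire (G : SinkDigraph n) (a : Fin n → ℤ) (i : Fin n) : Fin n → ℤ :=
  fun j => a j - G.redLap i j

/-- Result of firing a sequence of vertices. -/
def applySeq (G : SinkDigraph n) : (Fin n → ℤ) → List (Fin n) → (Fin n → ℤ)
  | a, [] => a
  | a, i :: s => G.applySeq (G.fire a i) s

/-- A firing sequence is legal from `a` if every fired vertex is active when fired. -/
def Legal (G : SinkDigraph n) : (Fin n → ℤ) → List (Fin n) → Prop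
  | _, [] => True
  | a, i :: s => G.redLap i i ≤ a i ∧ G.Legal (G.fire a i) s

/-- The firing script of a firing sequence. -/
def script (s : List (Fin n)) : Fin n → ℤ := fun i => (s.count i : ℤ)

/-- A configuration is stable if it is non-negative and no vertex is active. -/
def IsStable (G : SinkDigraph n) (a : Fin n → ℤ) : Prop :=
  ∀ i, 0 ≤ a i ∧ a i < G.redLap i i

/-- `b` is the stabilization of `a`. -/
def Stabilizes (G : SinkDigraph n) (a b : Fin n → ℤ) : Prop :=
  ∃ s : List (Fin n), G.Legal a s ∧ G.applySeq a s = b ∧ G.IsStable b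

/-- The maximal stable configuration `c_max`. -/
def cmax (G : SinkDigraph n) : Fin n → ℤ := fun i => (G.outDeg i.castSucc : ℤ) - 1

/-- A stable configuration is critical if it is the stabilization of `c_max + c`
for some non-negative `c`. -/
def IsCritical (G : SinkDigraph n) (a : Fin n → ℤ) : Prop :=
  ∃ c : Fin n → ℤ, 0 ≤ c ∧ G.Stabilizes (G.cmax + c) a

/-- `σΔ ≻ 0`, i.e. `σΔ` is non-negative and non-zero. -/
def GPositive (G : SinkDigraph n) (σ : Fin n → ℕ) : Prop :=
  0 ≤ Matrix.vecMul (natScript σ) G.redLap ∧ Matrix.vecMul (natScript σ) G.redLap ≠ 0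

/-- Reachability along directed edges. -/
def Reach (G : SinkDigraph n) : Fin (n + 1) → Fin (n + 1) → Prop :=
  Relation.ReflTransGen (fun u v => 0 < G.e u v)

/-- A source component: a strongly connected component with no in-going edge from outside. -/
def IsSourceComponent (G : SinkDigraph n) (S : Set (Fin (n + 1))) : Prop :=
  (∃ i, S = {j | G.Reach i j ∧ G.Reach j i}) ∧ ∀ j ∉ S, ∀ k ∈ S, G.e j k = 0

/-- A `G`-strongly positive script. -/
def GStronglyPositive (G : SinkDigraph n) (σ : Fin n → ℕ) : Prop :=
  G.GPositive σ ∧ ∀ S : Set (Fin (n + 1)), G.IsSourceComponent S →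
    ∃ i : Fin n, i.castSucc ∈ S ∧ Matrix.vecMul (natScript σ) G.redLap i ≠ 0

/-- Linear equivalence of configurations. -/
def Equiv (G : SinkDigraph n) (a b : Fin n → ℤ) : Prop :=
  ∃ σ : Fin n → ℤ, b - a = Matrix.vecMul σ G.redLap

/-- The weight of a configuration. -/
def weight (a : Fin n → ℤ) : ℤ := ∑ i, a i

/-- The energy (CFG) order: compare energy vectors `aΔ⁻¹` componentwise over ℚ. -/
def cfgLE (G : SinkDigraph n) (a b : Fin n → ℤ) : Prop :=
  Matrix.vecMul (fun i => (a i : ℚ)) (G.redLapQ)⁻¹ ≤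
    Matrix.vecMul (fun i => (b i : ℚ)) (G.redLapQ)⁻¹

/-- A non-negative configuration is superstable if reverse-firing any nonzero ℕ-script
produces a negative component. -/
def IsSuperstable (G : SinkDigraph n) (a : Fin n → ℤ) : Prop :=
  0 ≤ a ∧ ∀ σ : Fin n → ℕ, σ ≠ 0 →
    ∃ i, a i - Matrix.vecMul (natScript σ) G.redLap i < 0

end SinkDigraph

/-!
Put `x = c_max + c + σΔ`, where `a` is the stabilization of `c_max + c`. Firing the legal
sequence for `a` from `x` leads to `a + σΔ`, which stabilizes to `b`. On the other hand, since
`c_max + c + ρΔ` has an active vertex in the support of `ρ` whenever `0 ≠ ρ ∈ ℕⁿ` (the sink is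
reachable from everywhere), the script `σ` can be fired legally from `x` back to `c_max + c`,
which stabilizes to `a`. Stabilization is unique (least action principle), so `b = a`.
-/

namespace SinkDigraph

open Matrix

variable {n : ℕ} (G : SinkDigraph n)

lemma redLap_apply_self (i : Fin n) : G.redLap i i = G.outDeg i.castSucc := by
  simp [redLap, lap]

lemma redLap_apply_of_ne {i j : Fin n} (h : i ≠ j) :
    G.redLap i j = -(G.e i.castSucc j.castSucc : ℤ) := by
  simp [redLap, lap, h]

lemma redLap_apply_nonpos_of_ne {i j : Fin n} (h : i ≠ j) : G.redLap i j ≤ 0 := by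
  simp [G.redLap_apply_of_ne h]

lemma sum_redLap_row (i : Fin n) :
    ∑ j, G.redLap i j = G.e i.castSucc (Fin.last n) := by
  have hrow : ∀ j, G.redLap i j =
      (if i = j then (G.outDeg i.castSucc : ℤ) else 0) - G.e i.castSucc j.castSucc := by
    intro j
    rcases eq_or_ne i j with rfl | h
    · simp [G.redLap_apply_self, G.loopless]
    · simp [G.redLap_apply_of_ne h, h]
  have hdeg : (G.outDeg i.castSucc : ℤ) =
      ∑ j : Fin n, (G.e i.castSucc j.castSucc : ℤ) + G.e i.castSucc (Fin.last n) := by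
    simp [outDeg, Fin.sum_univ_castSucc]
  simp only [hrow, Finset.sum_sub_distrib, Finset.sum_ite_eq, Finset.mem_univ, if_true, hdeg]
  ring

lemma sum_vecMul_redLap (v : Fin n → ℤ) :
    ∑ j, vecMul v G.redLap j = ∑ i, v i * G.e i.castSucc (Fin.last n) := by
  simp only [vecMul, dotProduct, ← G.sum_redLap_row, Finset.mul_sum]
  exact Finset.sum_comm

lemma last_mem_of_forall_edge_mem {S : Set (Fin (n + 1))}
    (hS : ∀ u ∈ S, ∀ v, 0 < G.e u v → v ∈ S) {u : Fin (n + 1)} (hu : u ∈ S) :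
    Fin.last n ∈ S := by
  suffices ∀ v, G.Reach u v → v ∈ S from this _ (G.path_to_sink u)
  intro v huv
  induction huv with
  | refl => exact hu
  | tail _ hedge ih => exact hS _ ih _ hedge

lemma natScript_zero : natScript (0 : Fin n → ℕ) = 0 := rfl

lemma natScript_sub_single {ρ : Fin n → ℕ} {i : Fin n} (h : 1 ≤ ρ i) :
    natScript (ρ - Pi.single i 1) = natScript ρ - Pi.single i 1 := by
  funext j
  rcases eq_or_ne j i with rfl | hj
  · simp [natScript, h]
  · simp [natScript, hj]

lemma natScript_mul_redLap_nonpos {ρ : Fin n → ℕ} {j : Fin n} (h : ρ j = 0) (k : Fin n) :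
    natScript ρ k * G.redLap k j ≤ 0 := by
  rcases eq_or_ne k j with rfl | hk
  · simp [natScript, h]
  · exact mul_nonpos_of_nonneg_of_nonpos (by simp [natScript]) (G.redLap_apply_nonpos_of_ne hk)

lemma vecMul_natScript_redLap_nonpos {ρ : Fin n → ℕ} {j : Fin n} (h : ρ j = 0) :
    vecMul (natScript ρ) G.redLap j ≤ 0 :=
  Finset.sum_nonpos (s := Finset.univ) fun k _ => G.natScript_mul_redLap_nonpos h k

/-- The column sums of `ρΔ` add up to the number of chips `ρ` sends to the sink, so `ρΔ ≤ 0`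
forces `ρΔ = 0` with no edge from the support of `ρ` to the sink or out of the support. -/
lemma eq_zero_of_vecMul_natScript_redLap_nonpos {ρ : Fin n → ℕ}
    (h : ∀ j, vecMul (natScript ρ) G.redLap j ≤ 0) : ρ = 0 := by
  have hsum : ∑ j, vecMul (natScript ρ) G.redLap j = 0 :=
    le_antisymm (Finset.sum_nonpos fun j _ => h j)
      (G.sum_vecMul_redLap _ ▸ Finset.sum_nonneg fun i _ => by simp [natScript]; positivity)
  have hzero : ∀ j, vecMul (natScript ρ) G.redLap j = 0 := fun j =>
    (Finset.sum_eq_zero_iff_of_nonpos fun j _ => h j).1 hsum j (Finset.mem_univ j)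
  have hsink : ∀ i, natScript ρ i * G.e i.castSucc (Fin.last n) = 0 := by
    rw [G.sum_vecMul_redLap] at hsum
    exact fun i => (Finset.sum_eq_zero_iff_of_nonneg fun i _ =>
      mul_nonneg (by simp [natScript]) (by simp)).1 hsum i (Finset.mem_univ i)
  have hclosed : ∀ u ∈ Fin.castSucc '' {i | ρ i ≠ 0}, ∀ v, 0 < G.e u v →
      v ∈ Fin.castSucc '' {i | ρ i ≠ 0} := by
    rintro _ ⟨i, hi : ρ i ≠ 0, rfl⟩ v hv
    rcases Fin.eq_castSucc_or_eq_last v with ⟨j, rfl⟩ | rfl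
    · refine ⟨j, fun hj => ?_, rfl⟩
      have hij : i ≠ j := by rintro rfl; exact hi hj
      have := (Finset.sum_eq_zero_iff_of_nonpos (s := Finset.univ)
        fun k _ => G.natScript_mul_redLap_nonpos hj k).1 (hzero j) i (Finset.mem_univ i)
      simp [natScript, G.redLap_apply_of_ne hij, hi] at this
      omega
    · simpa [natScript, hi, hv.ne'] using hsink i
  by_contra hρ
  obtain ⟨i, hi⟩ := Function.ne_iff.1 hρ
  obtain ⟨j, -, hj⟩ := G.last_mem_of_forall_edge_mem hclosed (Set.mem_image_of_mem _ hi)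
  exact Fin.castSucc_ne_last j hj

lemma fire_eq (a : Fin n → ℤ) (i : Fin n) :
    G.fire a i = a - vecMul (Pi.single i 1) G.redLap := by
  rw [single_one_vecMul]
  rfl

lemma fire_add (a y : Fin n → ℤ) (i : Fin n) : G.fire (a + y) i = G.fire a i + y := by
  simp only [fire_eq]
  abel

lemma applySeq_add (a y : Fin n → ℤ) (s : List (Fin n)) :
    G.applySeq (a + y) s = G.applySeq a s + y := by
  induction s generalizing a with
  | nil => rfl
  | cons i s ih => simp only [applySeq, fire_add, ih]

lemma applySeq_append (a : Fin n → ℤ) (s t : List (Fin n)) :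
    G.applySeq a (s ++ t) = G.applySeq (G.applySeq a s) t := by
  induction s generalizing a with
  | nil => rfl
  | cons i s ih => exact ih _

lemma script_nil : script ([] : List (Fin n)) = 0 := rfl

lemma script_cons (i : Fin n) (s : List (Fin n)) :
    script (i :: s) = script s + Pi.single i 1 := by
  funext j
  rcases eq_or_ne j i with rfl | h
  · simp [script]
  · simp [script, h, Ne.symm h]

lemma applySeq_eq_sub (a : Fin n → ℤ) (s : List (Fin n)) :
    G.applySeq a s = a - vecMul (script s) G.redLap := by
  induction s generalizing a with
  | nil => simp [applySeq, script_nil]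
  | cons i s ih =>
    rw [applySeq, ih, script_cons, add_vecMul, fire_eq]
    abel

lemma legal_append {a : Fin n → ℤ} {s t : List (Fin n)}
    (hs : G.Legal a s) (ht : G.Legal (G.applySeq a s) t) : G.Legal a (s ++ t) := by
  induction s generalizing a with
  | nil => exact ht
  | cons i s ih => exact ⟨hs.1, ih hs.2 ht⟩

lemma legal_add_of_nonneg {a y : Fin n → ℤ} {s : List (Fin n)} (hs : G.Legal a s) (hy : 0 ≤ y) :
    G.Legal (a + y) s := by
  induction s generalizing a with
  | nil => trivial
  | cons i s ih =>
    refine ⟨hs.1.trans (le_add_of_nonneg_right (hy i)), ?_⟩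
    rw [fire_add]
    exact ih hs.2

lemma stabilizes_of_legal {a b : Fin n → ℤ} {s : List (Fin n)} (hs : G.Legal a s)
    (h : G.Stabilizes (G.applySeq a s) b) : G.Stabilizes a b := by
  obtain ⟨t, ht, rfl, hb⟩ := h
  exact ⟨s ++ t, G.legal_append hs ht, G.applySeq_append a s t, hb⟩

lemma count_le_of_legal {a : Fin n → ℤ} {t : List (Fin n)} (ht : G.Legal a t) {ρ : Fin n → ℕ}
    (hρ : G.IsStable (a - vecMul (natScript ρ) G.redLap)) (j : Fin n) : t.count j ≤ ρ j := by
  induction t generalizing a ρ with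
  | nil => simp
  | cons i t ih =>
    have hρi : 1 ≤ ρ i := by
      by_contra! h
      have hnonpos := G.vecMul_natScript_redLap_nonpos (Nat.lt_one_iff.1 h)
      have hstable := (hρ i).2
      rw [Pi.sub_apply] at hstable
      linarith [ht.1]
    have hfire : G.fire a i - vecMul (natScript (ρ - Pi.single i 1)) G.redLap =
        a - vecMul (natScript ρ) G.redLap := by
      rw [natScript_sub_single hρi, sub_vecMul, fire_eq]
      abel
    have := ih ht.2 (hfire ▸ hρ)
    rcases eq_or_ne j i with rfl | h
    · simp only [Pi.sub_apply, Pi.single_eq_same, List.count_cons_self] at this ⊢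
      omega
    · simpa [List.count_cons, h, Ne.symm h] using this

lemma Stabilizes.unique {G : SinkDigraph n} {a b₁ b₂ : Fin n → ℤ} (h₁ : G.Stabilizes a b₁)
    (h₂ : G.Stabilizes a b₂) : b₁ = b₂ := by
  obtain ⟨s₁, hs₁, rfl, hb₁⟩ := h₁
  obtain ⟨s₂, hs₂, rfl, hb₂⟩ := h₂
  simp only [applySeq_eq_sub] at hb₁ hb₂ ⊢
  have hscript : script s₁ = script s₂ := funext fun j => by
    have h₁₂ := G.count_le_of_legal hs₁ (ρ := fun i => s₂.count i) hb₂ j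
    have h₂₁ := G.count_le_of_legal hs₂ (ρ := fun i => s₁.count i) hb₁ j
    simp only [script]
    omega
  rw [hscript]

/-- A vertex where `ρΔ` is positive lies in the support of `ρ`, and it is active. -/
lemma exists_legal_applySeq_eq_of_cmax_le {x : Fin n → ℤ} (hx : G.cmax ≤ x) (ρ : Fin n → ℕ) :
    ∃ s, G.Legal (x + vecMul (natScript ρ) G.redLap) s ∧
      G.applySeq (x + vecMul (natScript ρ) G.redLap) s = x := by
  induction ρ using WellFoundedLT.induction with
  | _ ρ ih =>
  by_cases hρ : ρ = 0
  · exact ⟨[], trivial, by simp [hρ, natScript_zero, applySeq]⟩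
  obtain ⟨i, hi⟩ : ∃ i, 0 < vecMul (natScript ρ) G.redLap i := by
    by_contra! h
    exact hρ (G.eq_zero_of_vecMul_natScript_redLap_nonpos h)
  have hρi : 1 ≤ ρ i := Nat.one_le_iff_ne_zero.2 fun h =>
    (G.vecMul_natScript_redLap_nonpos h).not_gt hi
  have hlt : ρ - Pi.single i 1 < ρ :=
    Pi.lt_def.2 ⟨fun _ => tsub_le_self, i, by simp; omega⟩
  obtain ⟨s, hs, hs'⟩ := ih _ hlt
  have hfire : G.fire (x + vecMul (natScript ρ) G.redLap) i =
      x + vecMul (natScript (ρ - Pi.single i 1)) G.redLap := by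
    rw [natScript_sub_single hρi, sub_vecMul, fire_eq]
    abel
  have hactive : G.redLap i i ≤ x i + vecMul (natScript ρ) G.redLap i := by
    have := hx i
    simp only [cmax, G.redLap_apply_self] at this ⊢
    omega
  refine ⟨i :: s, ⟨hactive, hfire ▸ hs⟩, ?_⟩
  rw [applySeq, hfire, hs']

end SinkDigraph

open SinkDigraph Matrix

theorem critical_recurrent_of_positive (n : ℕ) (G : SinkDigraph n) (a : Fin n → ℤ)
    (ha : G.IsCritical a) (σ : Fin n → ℕ) (hσ : G.GPositive σ)
    (b : Fin n → ℤ)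
    (hb : G.Stabilizes (a + Matrix.vecMul (natScript σ) G.redLap) b) :
    b = a := by
  obtain ⟨c, hc, s, hs, rfl, ha_stable⟩ := ha
  set w := Matrix.vecMul (natScript σ) G.redLap
  have hb' : G.Stabilizes (G.cmax + c + w) b :=
    G.stabilizes_of_legal (G.legal_add_of_nonneg hs hσ.1) (by rwa [G.applySeq_add])
  obtain ⟨t, ht, hta⟩ := G.exists_legal_applySeq_eq_of_cmax_le (le_add_of_nonneg_right hc) σ
  have ha' : G.Stabilizes (G.cmax + c + w) (G.applySeq (G.cmax + c) s) :=
    G.stabilizes_of_legal ht (by rw [hta]; exact ⟨s, hs, rfl, ha_stable⟩)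
  exact hb'.unique ha'
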